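/- Parity-game correspondence: let P = (V, V_0, V_1, E, p, v_0) be a finite parity game with priorities in {0, …, n}, let f_0 be a positional strategy for Player 0, and let K_{P,f_0} be the Kripke structure obtained by projecting f_0 on the arena (worlds V, initial world v_0, transitions f_0 ∪ (E ∩ (V_1 × V)), each world w labeled by the single proposition p(w) from AP = {0, …, n}). Then f_0 is winning for Player 0 under the parity condition (every play consistent with f_0 from v_0 is won by Player 0) if and only if K_{P,f_0}, v_0 ⊨ φ^par, where φ^par = A(⋁_{k even} (G F k ∧ ⋀_{l ≥ k, l odd} F G ¬l)). -/

import Mathlib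

/-! The paths of `K_{P,f₀}` from `v₀` are exactly the plays from `v₀` consistent with `f₀`, and on a
path the body of `φ^par` says that some even priority `k ≤ n` occurs infinitely often while every
odd priority in `[k, n]` occurs only finitely often. As all priorities are at most `n`, the largest
priority occurring infinitely often exists, and this condition holds iff it is even. -/

namespace CycleCTL

universe u v

/-- A Kripke structure over a set `AP` of atomic propositions. -/
structure Kripke (AP : Type) : Type (u + 1) where
  World : Type u
  init : World
  R : World → World → Prop
  label : World → Set AP
  serial : ∀ w, ∃ v, R w v

variable {AP : Type}

/-- An (infinite) path of a Kripke structure. -/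
def IsPath (K : Kripke.{u} AP) (π : ℕ → K.World) : Prop :=
  ∀ i, K.R (π i) (π (i + 1))

/-- A cycle: a path visiting its first world infinitely often. -/
def IsCycle (K : Kripke.{u} AP) (π : ℕ → K.World) : Prop :=
  IsPath K π ∧ ∀ i, ∃ j, i < j ∧ π j = π 0

mutual
  /-- State formulas of Cycle-CTL*. -/
  inductive StateForm (AP : Type) : Type where
    | atom : AP → StateForm AP
    | not  : StateForm AP → StateForm AP
    | and  : StateForm AP → StateForm AP → StateForm AP
    | or   : StateForm AP → StateForm AP → StateForm AP
    | E    : PathForm AP → StateForm AP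
    | A    : PathForm AP → StateForm AP
    | Ec   : PathForm AP → StateForm AP
    | Ac   : PathForm AP → StateForm AP
  /-- Path formulas of Cycle-CTL*. -/
  inductive PathForm (AP : Type) : Type where
    | state : StateForm AP → PathForm AP
    | not   : PathForm AP → PathForm AP
    | and   : PathForm AP → PathForm AP → PathForm AP
    | or    : PathForm AP → PathForm AP → PathForm AP
    | next  : PathForm AP → PathForm AP
    | untl  : PathForm AP → PathForm AP → PathForm AP
end

mutual
  /-- Satisfaction of a state formula at a world. -/
  def SatS (K : Kripke.{u} AP) : K.World → StateForm AP → Prop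
    | w, .atom p => p ∈ K.label w
    | w, .not φ => ¬ SatS K w φ
    | w, .and φ₁ φ₂ => SatS K w φ₁ ∧ SatS K w φ₂
    | w, .or φ₁ φ₂ => SatS K w φ₁ ∨ SatS K w φ₂
    | w, .E ψ => ∃ π, IsPath K π ∧ π 0 = w ∧ SatP K π 0 ψ
    | w, .A ψ => ∀ π, IsPath K π → π 0 = w → SatP K π 0 ψ
    | w, .Ec ψ => ∃ π, IsCycle K π ∧ π 0 = w ∧ SatP K π 0 ψ
    | w, .Ac ψ => ∀ π, IsCycle K π → π 0 = w → SatP K π 0 ψ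
  /-- Satisfaction of a path formula on a path at a position. -/
  def SatP (K : Kripke.{u} AP) : (ℕ → K.World) → ℕ → PathForm AP → Prop
    | π, i, .state φ => SatS K (π i) φ
    | π, i, .not ψ => ¬ SatP K π i ψ
    | π, i, .and ψ₁ ψ₂ => SatP K π i ψ₁ ∧ SatP K π i ψ₂
    | π, i, .or ψ₁ ψ₂ => SatP K π i ψ₁ ∨ SatP K π i ψ₂
    | π, i, .next ψ => SatP K π (i + 1) ψ
    | π, i, .untl ψ₁ ψ₂ => ∃ k, SatP K π (i + k) ψ₂ ∧ ∀ j < k, SatP K π (i + j) ψ₁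
end

/-- `K ⊨ φ` : satisfaction at the initial world. -/
def Sat (K : Kripke.{u} AP) (φ : StateForm AP) : Prop := SatS K K.init φ

/-- `⊤` as a path formula, abbreviating `p ∨ ¬p`. -/
def topP (p : AP) : PathForm AP := .or (.state (.atom p)) (.not (.state (.atom p)))

/-- `F ψ` abbreviates `⊤ U ψ`. -/
def FP (p : AP) (ψ : PathForm AP) : PathForm AP := .untl (topP p) ψ

/-- `G ψ` abbreviates `¬(⊤ U ¬ψ)`. -/
def GP (p : AP) (ψ : PathForm AP) : PathForm AP := .not (FP p (.not ψ))


/-- Big disjunction of a list of path formulas (empty disjunction is `⊥ = ¬⊤`). -/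
def bigOrP (p : AP) (l : List (PathForm AP)) : PathForm AP :=
  l.foldr .or (.not (topP p))

/-- Big conjunction of a list of path formulas (empty conjunction is `⊤`). -/
def bigAndP (p : AP) (l : List (PathForm AP)) : PathForm AP :=
  l.foldr .and (topP p)

/-- The formula `φ^par = A (⋁_{k ≤ n even} (G F k ∧ ⋀_{k ≤ l ≤ n, l odd} F G ¬l))` over the
atomic propositions `AP = ℕ` (priorities). -/
def phiPar (n : ℕ) : StateForm ℕ :=
  .A (bigOrP 0 ((((List.range (n + 1)).filter (fun k => decide (Even k)))).map (fun k =>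
    .and (GP 0 (FP 0 (.state (.atom k))))
      (bigAndP 0 (((List.range (n + 1)).filter
          (fun l => decide (k ≤ l ∧ Odd l))).map (fun l =>
        FP 0 (GP 0 (.not (.state (.atom l))))))))))

/-- `π` is a play of the game from `v₀` consistent with the positional strategy `f₀` of
Player 0: at Player-0 states the strategy is followed, at Player-1 states any edge is taken. -/
def IsPlay {V : Type u} (P₀ : V → Prop) (E : V → V → Prop) (f₀ : V → V)
    (v₀ : V) (π : ℕ → V) : Prop :=
  π 0 = v₀ ∧
  ∀ i, (P₀ (π i) → π (i + 1) = f₀ (π i)) ∧ (¬ P₀ (π i) → E (π i) (π (i + 1)))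

/-- Priority `k` occurs infinitely often along `π`. -/
def InfOften {V : Type u} (pf : V → ℕ) (π : ℕ → V) (k : ℕ) : Prop :=
  ∀ N, ∃ i, N ≤ i ∧ pf (π i) = k

/-- Player 0 wins the play `π` under the parity condition: the maximum priority occurring
infinitely often along `π` is even. -/
def Win0 {V : Type u} (pf : V → ℕ) (π : ℕ → V) : Prop :=
  ∃ k, Even k ∧ InfOften pf π k ∧ ∀ l, InfOften pf π l → l ≤ k

/-- The Kripke structure `K_{P,f₀}` obtained by projecting the positional strategy `f₀` of
Player 0 on the arena: worlds `V`, initial world `v₀`, transitions `f₀ ∪ (E ∩ (V₁ × V))`,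
each world labeled by its priority. -/
def gameK (V : Type u) (P₀ : V → Prop) (E : V → V → Prop) (hE : ∀ v, ∃ u, E v u)
    (pf : V → ℕ) (v₀ : V) (f₀ : V → V) : Kripke.{u} ℕ where
  World := V
  init := v₀
  R := fun w v => (P₀ w ∧ v = f₀ w) ∨ (¬ P₀ w ∧ E w v)
  label := fun w => {pf w}
  serial := fun w => by
    classical
    by_cases h : P₀ w
    · exact ⟨f₀ w, Or.inl ⟨h, rfl⟩⟩
    · obtain ⟨u, hu⟩ := hE w
      exact ⟨u, Or.inr ⟨h, hu⟩⟩

section Semantics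

variable {K : Kripke.{u} AP} {π : ℕ → K.World} {i : ℕ} {p : AP} {ψ : PathForm AP}

lemma satP_topP : SatP K π i (topP p) := by
  simp only [topP, SatP]
  exact em _

lemma satP_FP : SatP K π i (FP p ψ) ↔ ∃ k, SatP K π (i + k) ψ := by
  simp only [FP, SatP]
  exact ⟨fun ⟨k, h, _⟩ => ⟨k, h⟩, fun ⟨k, h⟩ => ⟨k, h, fun _ _ => satP_topP⟩⟩

lemma satP_GP : SatP K π i (GP p ψ) ↔ ∀ k, SatP K π (i + k) ψ := by
  simp only [GP, SatP, satP_FP, not_exists, not_not]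

lemma satP_and {ψ₁ ψ₂ : PathForm AP} :
    SatP K π i (.and ψ₁ ψ₂) ↔ SatP K π i ψ₁ ∧ SatP K π i ψ₂ := by
  rw [SatP]

lemma satP_bigOrP_map {α : Type*} {f : α → PathForm AP} {l : List α} :
    SatP K π i (bigOrP p (l.map f)) ↔ ∃ a ∈ l, SatP K π i (f a) := by
  induction l with
  | nil => simp [bigOrP, SatP, satP_topP]
  | cons a t ih => simp_all [bigOrP, SatP]

lemma satP_bigAndP_map {α : Type*} {f : α → PathForm AP} {l : List α} :
    SatP K π i (bigAndP p (l.map f)) ↔ ∀ a ∈ l, SatP K π i (f a) := by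
  induction l with
  | nil => simp [bigAndP, satP_topP]
  | cons a t ih => simp_all [bigAndP, SatP]

lemma satP_GP_FP : SatP K π 0 (GP p (FP p ψ)) ↔ ∀ N, ∃ j, N ≤ j ∧ SatP K π j ψ := by
  simp only [satP_GP, satP_FP, zero_add]
  refine forall_congr' fun N => ⟨fun ⟨m, h⟩ => ⟨N + m, N.le_add_right m, h⟩, fun ⟨j, hj, h⟩ => ?_⟩
  exact ⟨j - N, by rwa [Nat.add_sub_cancel' hj]⟩

lemma satP_FP_GP : SatP K π 0 (FP p (GP p ψ)) ↔ ∃ N, ∀ j, N ≤ j → SatP K π j ψ := by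
  simp only [satP_GP, satP_FP, zero_add]
  refine exists_congr fun N => ⟨fun h j hj => ?_, fun h m => h _ (N.le_add_right m)⟩
  simpa [Nat.add_sub_cancel' hj] using h (j - N)

end Semantics

section Parity

variable {V : Type u} {pf : V → ℕ} {π : ℕ → V} {n : ℕ}

/-- `k` witnesses the disjunct of `φ^par` indexed by `k`. -/
def IsParityWitness (pf : V → ℕ) (π : ℕ → V) (n k : ℕ) : Prop :=
  Even k ∧ InfOften pf π k ∧ ∀ l, k ≤ l → l ≤ n → Odd l → ¬ InfOften pf π l

lemma InfOften.le {l : ℕ} (h : InfOften pf π l) (hp : ∀ i, pf (π i) ≤ n) : l ≤ n := by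
  obtain ⟨i, -, rfl⟩ := h 0
  exact hp i

lemma win0_iff_exists_isParityWitness (hp : ∀ i, pf (π i) ≤ n) :
    Win0 pf π ↔ ∃ k ≤ n, IsParityWitness pf π n k := by
  constructor
  · rintro ⟨k, hk, hinf, hmax⟩
    refine ⟨k, hinf.le hp, hk, hinf, fun l hkl _ hl hlinf => ?_⟩
    rw [le_antisymm (hmax l hlinf) hkl] at hl
    exact Nat.not_odd_iff_even.mpr hk hl
  · classical
    rintro ⟨k, hkn, -, hkinf, hodd⟩
    set m := Nat.findGreatest (InfOften pf π) n
    have hminf : InfOften pf π m := Nat.findGreatest_spec hkn hkinf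
    have hm : Even m := by
      by_contra hm
      exact hodd m (Nat.le_findGreatest hkn hkinf) (Nat.findGreatest_le n)
        (Nat.not_even_iff_odd.mp hm) hminf
    exact ⟨m, hm, hminf, fun l hl => Nat.le_findGreatest (hl.le hp) hl⟩

end Parity

section Game

variable {V : Type u} {P₀ : V → Prop} {E : V → V → Prop} {hE : ∀ v, ∃ u, E v u}
  {pf : V → ℕ} {v₀ : V} {f₀ : V → V}

lemma isPlay_iff_isPath {π : ℕ → V} :
    IsPlay P₀ E f₀ v₀ π ↔ IsPath (gameK V P₀ E hE pf v₀ f₀) π ∧ π 0 = v₀ := by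
  refine ⟨fun ⟨h0, hs⟩ => ⟨fun i => ?_, h0⟩, fun ⟨hpath, h0⟩ => ⟨h0, fun i => ?_⟩⟩
  · by_cases h : P₀ (π i)
    · exact Or.inl ⟨h, (hs i).1 h⟩
    · exact Or.inr ⟨h, (hs i).2 h⟩
  · rcases hpath i with ⟨h, hnext⟩ | ⟨h, hedge⟩
    · exact ⟨fun _ => hnext, fun h' => absurd h h'⟩
    · exact ⟨fun h' => absurd h' h, fun _ => hedge⟩

lemma satS_gameK_atom {w : (gameK V P₀ E hE pf v₀ f₀).World} {k : ℕ} :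
    SatS (gameK V P₀ E hE pf v₀ f₀) w (.atom k) ↔ pf w = k := by
  simp only [SatS, gameK, Set.mem_singleton_iff, eq_comm]

variable {π : ℕ → (gameK V P₀ E hE pf v₀ f₀).World}

lemma satP_gameK_GP_FP_atom {k : ℕ} :
    SatP (gameK V P₀ E hE pf v₀ f₀) π 0 (GP 0 (FP 0 (.state (.atom k)))) ↔ InfOften pf π k := by
  refine satP_GP_FP.trans ?_
  simp only [SatP, satS_gameK_atom, InfOften]

lemma satP_gameK_FP_GP_not_atom {l : ℕ} :
    SatP (gameK V P₀ E hE pf v₀ f₀) π 0 (FP 0 (GP 0 (.not (.state (.atom l))))) ↔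
      ¬ InfOften pf π l := by
  refine satP_FP_GP.trans ?_
  simp only [SatP, satS_gameK_atom, InfOften, not_forall, not_exists, not_and]

lemma satS_gameK_phiPar {w : V} {n : ℕ} :
    SatS (gameK V P₀ E hE pf v₀ f₀) w (phiPar n) ↔
      ∀ π : ℕ → V, IsPath (gameK V P₀ E hE pf v₀ f₀) π → π 0 = w →
        ∃ k ≤ n, IsParityWitness pf π n k := by
  simp only [phiPar, SatS]
  refine forall₃_congr fun π _ _ => ?_
  simp only [satP_bigOrP_map, satP_and, satP_bigAndP_map, List.mem_filter, List.mem_range,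
    Nat.lt_succ_iff, decide_eq_true_eq, satP_gameK_GP_FP_atom, satP_gameK_FP_GP_not_atom,
    IsParityWitness]
  refine exists_congr fun k => ?_
  grind

end Game

/-- for a finite parity game with priorities in `{0, …, n}` and a positional
strategy `f₀` for Player 0, `f₀` is winning for Player 0 under the parity condition iff
`K_{P,f₀}, v₀ ⊨ φ^par`. -/
theorem stmt18 (V : Type u) [Finite V] [Nonempty V]
    (P₀ : V → Prop) (E : V → V → Prop) (hE : ∀ v, ∃ u, E v u)
    (pf : V → ℕ) (n : ℕ) (hp : ∀ v, pf v ≤ n)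
    (v₀ : V) (f₀ : V → V) (hf₀ : ∀ v, P₀ v → E v (f₀ v)) :
    (∀ π : ℕ → V, IsPlay P₀ E f₀ v₀ π → Win0 pf π) ↔
      SatS (gameK V P₀ E hE pf v₀ f₀) v₀ (phiPar n) := by
  rw [satS_gameK_phiPar]
  refine forall_congr' fun π => ?_
  rw [isPlay_iff_isPath (hE := hE) (pf := pf), and_imp,
    win0_iff_exists_isParityWitness fun i => hp (π i)]

end CycleCTL
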